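/- Let p = 2n−1 be a prime with p ≡ 1 (mod 4) and x a fixed quadratic nonresidue mod p. Let s̄ = Σ_{q ∈ Q_p} e^{2πiq/p}, and define |Q(a)⟩ = (N, 0,...,0) + Σ_{q ∈ Q_p} e^{2πiqa/p} ê_q ∈ ℂⁿ, where N is real and chosen so that (N² + s̄)(N² − 1 − s̄) = 0, i.e., N² = −s̄ or N² = 1 + s̄, whichever is nonnegative. Then the p product states |Q(a)⟩ ⊗ |Q(xa)⟩, a ∈ ℤ/p, are mutually orthogonal in ℂⁿ ⊗ ℂⁿ. -/

import Mathlib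

-- The QuadRes vector |Q(a)⟩ ∈ ℂⁿ: first coordinate N, and coordinate
-- e^{2πiqa/p} at each nonzero quadratic residue q of ℤ/p (n = 1 + |Q_p| = (p+1)/2).
open Classical in
noncomputable def qrVec (p : ℕ) [NeZero p] (N : ℝ) (a : ZMod p) :
    EuclideanSpace ℂ (Option {z : ZMod p // z ≠ 0 ∧ IsSquare z}) :=
  WithLp.toLp 2 fun idx =>
    match idx with
    | none => (N : ℂ)
    | some q => Complex.exp (2 * Real.pi * Complex.I * (((q.1 * a).val : ℕ) : ℂ) / p)

namespace Stmt17Aux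

noncomputable def ee (p : ℕ) [NeZero p] (z : ZMod p) : ℂ :=
  Complex.exp (2 * Real.pi * Complex.I * ((z.val : ℕ) : ℂ) / p)

variable {p : ℕ} [NeZero p]

lemma ee_eq_pow (z : ZMod p) :
    ee p z = Complex.exp (2 * Real.pi * Complex.I / p) ^ z.val := by
  rw [ee, ← Complex.exp_nat_mul]
  ring_nf

lemma zeta_pow : Complex.exp (2 * Real.pi * Complex.I / p) ^ p = 1 := by
  rw [← Complex.exp_nat_mul]
  have hp : (p : ℂ) ≠ 0 := Nat.cast_ne_zero.mpr (NeZero.ne p)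
  rw [show (p : ℂ) * (2 * Real.pi * Complex.I / p) = 2 * Real.pi * Complex.I by
    field_simp]
  exact Complex.exp_two_pi_mul_I

lemma zeta_pow_mod (m : ℕ) :
    Complex.exp (2 * Real.pi * Complex.I / p) ^ m
      = Complex.exp (2 * Real.pi * Complex.I / p) ^ (m % p) := by
  conv_lhs => rw [← Nat.mod_add_div m p]
  rw [pow_add, pow_mul, zeta_pow, one_pow, mul_one]

lemma ee_add (z w : ZMod p) : ee p (z + w) = ee p z * ee p w := by
  rw [ee_eq_pow, ee_eq_pow, ee_eq_pow, ← pow_add, ZMod.val_add, ← zeta_pow_mod]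

lemma ee_zero : ee p 0 = 1 := by
  simp [ee]

lemma ee_mul_neg (z : ZMod p) : ee p z * ee p (-z) = 1 := by
  rw [← ee_add]; simp [ee_zero]

lemma conj_ee (z : ZMod p) : (starRingEnd ℂ) (ee p z) = ee p (-z) := by
  have h2 : (starRingEnd ℂ) (ee p z) * ee p z = 1 := by
    rw [ee, ← Complex.exp_conj, ← Complex.exp_add]
    have : (starRingEnd ℂ) (2 * Real.pi * Complex.I * ((z.val : ℕ) : ℂ) / p)
        = -(2 * Real.pi * Complex.I * ((z.val : ℕ) : ℂ) / p) := by
      simp only [map_div₀, map_mul, map_ofNat, Complex.conj_I, Complex.conj_ofReal,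
        map_natCast]
      ring
    rw [this, neg_add_cancel, Complex.exp_zero]
  calc (starRingEnd ℂ) (ee p z)
      = (starRingEnd ℂ) (ee p z) * (ee p z * ee p (-z)) := by rw [ee_mul_neg, mul_one]
    _ = ((starRingEnd ℂ) (ee p z) * ee p z) * ee p (-z) := by ring
    _ = ee p (-z) := by rw [h2, one_mul]

open Classical in
noncomputable def S (p : ℕ) [NeZero p] (c : ZMod p) : ℂ :=
  ∑ z ∈ Finset.univ.filter (fun z : ZMod p => z ≠ 0 ∧ IsSquare z), ee p (z * c)

open Classical in
lemma inner_qrVec (N : ℝ) (a b : ZMod p) :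
    (inner ℂ (qrVec p N a) (qrVec p N b) : ℂ) = (N : ℂ) ^ 2 + S p (b - a) := by
  rw [PiLp.inner_apply]
  simp only [RCLike.inner_apply']
  rw [Fintype.sum_option]
  have h0 : (starRingEnd ℂ) (qrVec p N a none) * qrVec p N b none = (N : ℂ) ^ 2 := by
    simp [qrVec, Complex.conj_ofReal, sq]
  rw [h0]
  congr 1
  rw [S, Finset.sum_subtype (p := fun z : ZMod p => z ≠ 0 ∧ IsSquare z)
    (Finset.univ.filter (fun z : ZMod p => z ≠ 0 ∧ IsSquare z))
    (by simp) (fun z => ee p (z * (b - a)))]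
  apply Finset.sum_congr rfl
  intro q _
  show (starRingEnd ℂ) (ee p (q.1 * a)) * ee p (q.1 * b) = ee p (q.1 * (b - a))
  rw [conj_ee, ← ee_add]
  congr 1
  ring

end Stmt17Aux

namespace Stmt17Aux

variable {p : ℕ} [NeZero p]

section prime
variable [hF : Fact p.Prime]

lemma nonsq_mul_nonsq {a b : ZMod p} (ha : a ≠ 0) (hb : b ≠ 0)
    (has : ¬IsSquare a) (hbs : ¬IsSquare b) : IsSquare (a * b) := by
  have h1 := (quadraticChar_neg_one_iff_not_isSquare (F := ZMod p)).mpr has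
  have h2 := (quadraticChar_neg_one_iff_not_isSquare (F := ZMod p)).mpr hbs
  have : quadraticChar (ZMod p) (a * b) = 1 := by rw [map_mul, h1, h2]; ring
  exact (quadraticChar_one_iff_isSquare (mul_ne_zero ha hb)).mp this

lemma sq_mul_nonsq {a b : ZMod p} (ha : a ≠ 0) (has : IsSquare a)
    (hbs : ¬IsSquare b) : ¬IsSquare (a * b) := by
  intro h
  by_cases hb : b = 0
  · exact hbs (hb ▸ IsSquare.zero)
  have h1 := (quadraticChar_one_iff_isSquare ha).mpr has
  have h3 := (quadraticChar_one_iff_isSquare (mul_ne_zero ha hb)).mpr h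
  have h2 := (quadraticChar_neg_one_iff_not_isSquare (F := ZMod p)).mpr hbs
  rw [map_mul, h1, h2] at h3
  norm_num at h3

lemma sq_inv {u : ZMod p} (hus : IsSquare u) : IsSquare u⁻¹ := by
  obtain ⟨d, hd⟩ := hus
  exact ⟨d⁻¹, by rw [hd, mul_inv_rev]⟩

lemma nonsq_inv {u : ZMod p} (hus : ¬IsSquare u) : ¬IsSquare u⁻¹ := by
  intro h
  by_cases hu : u = 0
  · simp [hu] at h; exact hus (by simp [hu])
  exact hus (by simpa using sq_inv h)

open Classical in
lemma S_mul_sq (c : ZMod p) {u : ZMod p} (hu : u ≠ 0) (hus : IsSquare u) :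
    S p (u * c) = S p c := by
  rw [S, S]
  refine Finset.sum_nbij' (fun z => z * u) (fun z => z * u⁻¹) ?_ ?_ ?_ ?_ ?_
  · intro z hz
    simp only [Finset.mem_filter, Finset.mem_univ, true_and] at hz ⊢
    exact ⟨mul_ne_zero hz.1 hu, hz.2.mul hus⟩
  · intro z hz
    simp only [Finset.mem_filter, Finset.mem_univ, true_and] at hz ⊢
    exact ⟨mul_ne_zero hz.1 (inv_ne_zero hu), hz.2.mul (sq_inv hus)⟩
  · intro z _; field_simp
  · intro z _; field_simp
  · intro z _; congr 1; ring

open Classical in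
lemma S_add_S {c : ZMod p} (hc : c ≠ 0) {x : ZMod p} (hx0 : x ≠ 0)
    (hxs : ¬IsSquare x) : S p c + S p (x * c) = -1 := by
  have hsum0 : ∑ z : ZMod p, ee p (z * c) = 0 := by
    have h1 : ∑ z : ZMod p, ee p (z * c) = ∑ z : ZMod p, ee p z :=
      Fintype.sum_equiv (Equiv.mulRight₀ c hc) _ _ (fun z => rfl)
    rw [h1]
    have h2 : ∑ z : ZMod p, ee p z
        = ∑ m ∈ Finset.range p, Complex.exp (2 * Real.pi * Complex.I / p) ^ m := by
      refine Finset.sum_nbij' (fun z : ZMod p => z.val) (fun m : ℕ => (m : ZMod p))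
        ?_ ?_ ?_ ?_ ?_
      · intro z _; exact Finset.mem_range.mpr (ZMod.val_lt z)
      · intro m _; exact Finset.mem_univ _
      · intro z _; simp [ZMod.natCast_val, ZMod.cast_id]
      · intro m hm; exact ZMod.val_cast_of_lt (Finset.mem_range.mp hm)
      · intro z _; exact ee_eq_pow z
    rw [h2]
    exact (Complex.isPrimitiveRoot_exp p (NeZero.ne p)).geom_sum_eq_zero hF.out.one_lt
  -- S p (x*c) = sum over nonsquares
  have hxc : S p (x * c) = ∑ z ∈ Finset.univ.filter
      (fun z : ZMod p => z ≠ 0 ∧ ¬IsSquare z), ee p (z * c) := by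
    rw [S]
    refine Finset.sum_nbij' (fun z => z * x) (fun z => z * x⁻¹) ?_ ?_ ?_ ?_ ?_
    · intro z hz
      simp only [Finset.mem_filter, Finset.mem_univ, true_and] at hz ⊢
      exact ⟨mul_ne_zero hz.1 hx0, sq_mul_nonsq hz.1 hz.2 hxs⟩
    · intro z hz
      simp only [Finset.mem_filter, Finset.mem_univ, true_and] at hz ⊢
      exact ⟨mul_ne_zero hz.1 (inv_ne_zero hx0),
        nonsq_mul_nonsq hz.1 (inv_ne_zero hx0) hz.2 (nonsq_inv hxs)⟩
    · intro z _; field_simp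
    · intro z _; field_simp
    · intro z _; congr 1; ring
  rw [S, hxc]
  have hpart : (∑ z ∈ Finset.univ.filter (fun z : ZMod p => z ≠ 0 ∧ IsSquare z),
        ee p (z * c))
      + ∑ z ∈ Finset.univ.filter (fun z : ZMod p => z ≠ 0 ∧ ¬IsSquare z), ee p (z * c)
      = ∑ z ∈ Finset.univ.filter (fun z : ZMod p => z ≠ 0), ee p (z * c) := by
    rw [show (Finset.univ.filter (fun z : ZMod p => z ≠ 0 ∧ IsSquare z))
        = (Finset.univ.filter (fun z : ZMod p => z ≠ 0)).filter (fun z => IsSquare z) by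
      rw [Finset.filter_filter],
      show (Finset.univ.filter (fun z : ZMod p => z ≠ 0 ∧ ¬IsSquare z))
        = (Finset.univ.filter (fun z : ZMod p => z ≠ 0)).filter (fun z => ¬IsSquare z) by
      rw [Finset.filter_filter]]
    exact Finset.sum_filter_add_sum_filter_not _ _ _
  rw [hpart]
  have : ∑ z ∈ Finset.univ.filter (fun z : ZMod p => z ≠ 0), ee p (z * c)
      = (∑ z : ZMod p, ee p (z * c)) - ee p (0 * c) := by
    rw [Finset.filter_ne', Finset.sum_erase_eq_sub (Finset.mem_univ 0)]
  rw [this, hsum0]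
  simp [ee_zero]

end prime
end Stmt17Aux


-- QuadRes: for a prime p = 2n−1 ≡ 1 (mod 4), a quadratic nonresidue x, and N
-- real with (N² + s̄)(N² − 1 − s̄) = 0 where s̄ = Σ_{q ∈ Q_p} e^{2πiq/p}, the p
-- product states |Q(a)⟩ ⊗ |Q(xa)⟩ (a ∈ ℤ/p) are mutually orthogonal:
-- ⟨Q(a),Q(b)⟩ ⟨Q(xa),Q(xb)⟩ = 0 for a ≠ b.
open Classical in
theorem stmt17 (p n : ℕ) [NeZero p] (hprime : Nat.Prime p) (hp4 : p % 4 = 1)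
    (hpn : p = 2 * n - 1)
    (x : ZMod p) (hx0 : x ≠ 0) (hxns : ¬ IsSquare x)
    (N : ℝ) (sbar : ℂ)
    (hsbar : sbar = ∑ z : ZMod p, if z ≠ 0 ∧ IsSquare z
        then Complex.exp (2 * Real.pi * Complex.I * ((z.val : ℕ) : ℂ) / p) else 0)
    (hN : ((N : ℂ) ^ 2 + sbar) * ((N : ℂ) ^ 2 - 1 - sbar) = 0) :
    ∀ a b : ZMod p, a ≠ b →
      (inner ℂ (qrVec p N a) (qrVec p N b) : ℂ) *
        (inner ℂ (qrVec p N (x * a)) (qrVec p N (x * b)) : ℂ) = 0 := by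
  haveI : Fact p.Prime := ⟨hprime⟩
  intro a b hab
  set c : ZMod p := b - a with hc
  have hcne : c ≠ 0 := sub_ne_zero_of_ne (Ne.symm hab)
  have hs1 : sbar = Stmt17Aux.S p 1 := by
    rw [hsbar, Stmt17Aux.S, ← Finset.sum_filter]
    exact Finset.sum_congr rfl (fun z _ => by rw [Stmt17Aux.ee, mul_one])
  have h1 : (inner ℂ (qrVec p N a) (qrVec p N b) : ℂ)
      = (N : ℂ) ^ 2 + Stmt17Aux.S p c := Stmt17Aux.inner_qrVec N a b
  have h2 : (inner ℂ (qrVec p N (x * a)) (qrVec p N (x * b)) : ℂ)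
      = (N : ℂ) ^ 2 + Stmt17Aux.S p (x * c) := by
    rw [Stmt17Aux.inner_qrVec N (x * a) (x * b)]
    congr 2
    rw [hc]; ring
  rw [h1, h2]
  by_cases hcs : IsSquare c
  · have hSc : Stmt17Aux.S p c = sbar := by
      rw [hs1, ← Stmt17Aux.S_mul_sq 1 hcne hcs, mul_one]
    have hSxc : Stmt17Aux.S p (x * c) = -1 - sbar := by
      have := Stmt17Aux.S_add_S hcne hx0 hxns
      rw [hSc] at this
      linear_combination this
    rw [hSc, hSxc]
    linear_combination hN
  · set d : ZMod p := x⁻¹ * c with hd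
    have hdne : d ≠ 0 := mul_ne_zero (inv_ne_zero hx0) hcne
    have hds : IsSquare d :=
      Stmt17Aux.nonsq_mul_nonsq (inv_ne_zero hx0) hcne (Stmt17Aux.nonsq_inv hxns) hcs
    have hcd : c = x * d := by
      rw [hd]; field_simp
    have hSd : Stmt17Aux.S p d = sbar := by
      rw [hs1, ← Stmt17Aux.S_mul_sq 1 hdne hds, mul_one]
    have hSc : Stmt17Aux.S p c = -1 - sbar := by
      have := Stmt17Aux.S_add_S hdne hx0 hxns
      rw [hSd, ← hcd] at this
      linear_combination this
    have hSxc : Stmt17Aux.S p (x * c) = sbar := by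
      have hxx : x * c = (x * x) * d := by rw [hcd]; ring
      have hxxne : x * x ≠ 0 := mul_ne_zero hx0 hx0
      have hxxs : IsSquare (x * x) := ⟨x, rfl⟩
      rw [hxx, Stmt17Aux.S_mul_sq d hxxne hxxs, hSd]
    rw [hSc, hSxc]
    linear_combination hN
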